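/- The energy-efficiency function η_EE(P) = log₂(1 + g·P/N) / (ζ·P + P_C), with g, N, ζ, P_C > 0, is strictly quasiconcave on [0, ∞). -/

import Mathlib

/-!
The rate `P ↦ log₂ (1 + g P / N)` is strictly concave and the consumed power `P ↦ ζ P + P_C` is
affine and positive. If `m` is the smaller of the two efficiencies at `x` and `y`, then
`rate ≥ m · power` at both points; averaging, strict concavity of the rate and affinity of the power
give `rate > m · power` at every interior point of the segment, i.e. the efficiency there exceeds `m`.
-/

open Set Function

def StrictQuasiconcaveOn (𝕜 : Type*) {E β : Type*} [Semiring 𝕜] [PartialOrder 𝕜]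
    [AddCommMonoid E] [SMul 𝕜 E] [LinearOrder β] (s : Set E) (f : E → β) : Prop :=
  Convex 𝕜 s ∧ ∀ ⦃x⦄, x ∈ s → ∀ ⦃y⦄, y ∈ s → x ≠ y →
    ∀ ⦃a b : 𝕜⦄, 0 < a → 0 < b → a + b = 1 → min (f x) (f y) < f (a • x + b • y)

theorem StrictConcaveOn.comp_affineMap_of_injective {𝕜 E F β : Type*} [Field 𝕜] [LinearOrder 𝕜]
    [IsStrictOrderedRing 𝕜] [AddCommGroup E] [Module 𝕜 E] [AddCommGroup F] [Module 𝕜 F]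
    [AddCommMonoid β] [PartialOrder β] [SMul 𝕜 β] {s : Set F} {f : F → β}
    (hf : StrictConcaveOn 𝕜 s f) (g : E →ᵃ[𝕜] F) (hg : Injective g) :
    StrictConcaveOn 𝕜 (g ⁻¹' s) (f ∘ g) :=
  ⟨hf.1.affine_preimage g, fun _ hx _ hy hxy _ _ ha hb hab => by
    simpa only [comp_apply, Convex.combo_affine_apply hab] using
      hf.2 hx hy (hg.ne hxy) ha hb hab⟩

theorem strictConcaveOn_logb_Ioi {b : ℝ} (hb : 1 < b) :
    StrictConcaveOn ℝ (Ioi 0) (Real.logb b) := by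
  refine ⟨convex_Ioi 0, fun x hx y hy hxy a c ha hc hac => ?_⟩
  have hlog := strictConcaveOn_log_Ioi.2 hx hy hxy ha hc hac
  simp only [smul_eq_mul, Real.logb] at hlog ⊢
  have hlogb : 0 < Real.log b := Real.log_pos hb
  calc a * (Real.log x / Real.log b) + c * (Real.log y / Real.log b)
      = (a * Real.log x + c * Real.log y) / Real.log b := by ring
    _ < Real.log (a * x + c * y) / Real.log b := by gcongr

theorem StrictConcaveOn.strictQuasiconcaveOn_div {𝕜 E : Type*} [Field 𝕜] [LinearOrder 𝕜]
    [IsStrictOrderedRing 𝕜] [AddCommGroup E] [Module 𝕜 E] {s : Set E} {f : E → 𝕜}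
    (hf : StrictConcaveOn 𝕜 s f) (d : E →ᵃ[𝕜] 𝕜) (hd : ∀ x ∈ s, 0 < d x) :
    StrictQuasiconcaveOn 𝕜 s (fun x => f x / d x) := by
  refine ⟨hf.1, fun x hx y hy hxy a b ha hb hab => ?_⟩
  set m := min (f x / d x) (f y / d y)
  have hmx : m * d x ≤ f x := (le_div_iff₀ (hd x hx)).1 (min_le_left _ _)
  have hmy : m * d y ≤ f y := (le_div_iff₀ (hd y hy)).1 (min_le_right _ _)
  rw [lt_div_iff₀ (hd _ (hf.1 hx hy ha.le hb.le hab)), Convex.combo_affine_apply hab]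
  calc m * (a • d x + b • d y) = a * (m * d x) + b * (m * d y) := by
        simp only [smul_eq_mul]; ring
    _ ≤ a • f x + b • f y := by simp only [smul_eq_mul]; gcongr
    _ < f (a • x + b • y) := hf.2 hx hy hxy ha hb hab

theorem stmt_7 (g N ζ PC : ℝ) (hg : 0 < g) (hN : 0 < N) (hζ : 0 < ζ)
    (hPC : 0 < PC) :
    ∀ x ∈ Set.Ici (0 : ℝ), ∀ y ∈ Set.Ici (0 : ℝ), x ≠ y →
      ∀ lam : ℝ, 0 < lam → lam < 1 →
        (fun P : ℝ => Real.logb 2 (1 + g * P / N) / (ζ * P + PC))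
            (lam * x + (1 - lam) * y) >
          min (Real.logb 2 (1 + g * x / N) / (ζ * x + PC))
            (Real.logb 2 (1 + g * y / N) / (ζ * y + PC)) := by
  intro x hx y hy hxy lam hlam0 hlam1
  let snr : ℝ →ᵃ[ℝ] ℝ :=
    ((g / N) • LinearMap.id : ℝ →ₗ[ℝ] ℝ).toAffineMap + AffineMap.const ℝ ℝ 1
  let power : ℝ →ᵃ[ℝ] ℝ :=
    (ζ • LinearMap.id : ℝ →ₗ[ℝ] ℝ).toAffineMap + AffineMap.const ℝ ℝ PC
  have hsnr (P : ℝ) : snr P = 1 + g * P / N := by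
    change g / N * P + 1 = _
    ring
  have hsnr_inj : Injective snr := fun P Q h => by
    rw [hsnr, hsnr] at h
    field_simp at h
    exact mul_left_cancel₀ hg.ne' (by linarith)
  have hrate : StrictConcaveOn ℝ (Ici 0) (fun P => Real.logb 2 (1 + g * P / N)) := by
    refine (((strictConcaveOn_logb_Ioi one_lt_two).comp_affineMap_of_injective snr
      hsnr_inj).subset (fun P (hP : 0 ≤ P) => ?_) (convex_Ici 0)).congr fun P _ => ?_
    · change 0 < snr P
      rw [hsnr]
      positivity
    · simp only [comp_apply, hsnr]
  have hEE := hrate.strictQuasiconcaveOn_div power fun P (hP : 0 ≤ P) =>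
    show 0 < ζ * P + PC by positivity
  exact hEE.2 hx hy hxy hlam0 (sub_pos.2 hlam1) (add_sub_cancel _ _)
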